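/- Under the assumptions of the SPPS recursion (functions u₀² r_k and 1/(u₀²p) continuous, hence bounded by m, on [a,b]), for every fixed λ ∈ ℂ the series Σ_{n=0}^∞ λⁿ X̃^{(2n)}(x) converges uniformly and absolutely on [a,b], with Σ_{n=0}^∞ |λ|ⁿ |X̃^{(2n)}(x)| ≤ (Σ_{k=0}^{N-1} M^k) cosh(M^{N/2}) where M = |λ|((m(b-a))² + 1). -/

import Mathlib

/-!
Write `Yₙ = X̃⁽²ⁿ⁾` and `φⱼ(x) = (m |x - x₀|)ʲ / j!`, so that `m |∫_{x₀}^x φⱼ| = φⱼ₊₁(x)`.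
By strong induction, `‖Yₙ‖ ≤ ∑ᵢ c(n, i) φ₂ᵢ` with `c(n, i) = C(n, i)` if `n ≤ N i` and `0`
otherwise: the two integrations of the recursion turn `φ₂ᵢ` into `φ₂ᵢ₊₂`, and the hockey-stick
identity absorbs the sum over `k`. Since `c(n, i) ≠ 0` forces `i ≥ ⌊n / N⌋`, the binomial theorem
gives `‖Yₙ‖ ≤ ((m (b - a))² + 1)ⁿ / (2 ⌊n / N⌋)!`. Summing `|λ|ⁿ` times this bound separately over
each residue class of `n` modulo `N` produces `(∑_{k<N} Mᵏ) cosh (M^{N/2})`, and the Weierstrass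
M-test gives the uniform convergence.
-/

open MeasureTheory Filter Finset Nat

noncomputable def powTerm (m x₀ : ℝ) (j : ℕ) (x : ℝ) : ℝ := (m * |x - x₀|) ^ j / j !

lemma powTerm_nonneg {m : ℝ} (hm : 0 ≤ m) (x₀ : ℝ) (j : ℕ) (x : ℝ) : 0 ≤ powTerm m x₀ j x := by
  unfold powTerm; positivity

lemma continuous_powTerm (m x₀ : ℝ) (j : ℕ) : Continuous (powTerm m x₀ j) := by
  unfold powTerm; fun_prop

lemma mul_abs_integral_powTerm {m : ℝ} (hm : 0 ≤ m) (x₀ x : ℝ) (j : ℕ) :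
    m * |∫ y in x₀..x, powTerm m x₀ j y| = powTerm m x₀ (j + 1) x := by
  simp only [powTerm, mul_pow, mul_div_right_comm _ (|_ - x₀| ^ j),
    intervalIntegral.integral_const_mul, abs_mul,
    intervalIntegral.abs_integral_eq_abs_integral_uIoc, integral_pow_abs_sub_uIoc]
  rw [abs_of_nonneg (by positivity), abs_of_nonneg (by positivity), factorial_succ]
  push_cast
  field_simp
  ring

lemma norm_integral_le_sum_powTerm {E ι : Type*} [NormedAddCommGroup E] [NormedSpace ℝ E]
    {a b m x₀ x : ℝ} (hm : 0 ≤ m) (hx₀ : x₀ ∈ Set.Icc a b) (hx : x ∈ Set.Icc a b)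
    {f : ℝ → E} (s : Finset ι) (c : ι → ℝ) (hc : ∀ i, 0 ≤ c i) (j : ι → ℕ)
    (hf : ∀ y ∈ Set.Icc a b, ‖f y‖ ≤ m * ∑ i ∈ s, c i * powTerm m x₀ (j i) y) :
    ‖∫ y in x₀..x, f y‖ ≤ ∑ i ∈ s, c i * powTerm m x₀ (j i + 1) x := by
  have hsub : Set.uIoc x₀ x ⊆ Set.Icc a b :=
    Set.uIoc_subset_uIcc.trans (Set.uIcc_subset_Icc hx₀ hx)
  have hcont : ∀ i, Continuous fun y => c i * powTerm m x₀ (j i) y := fun i =>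
    (continuous_powTerm m x₀ (j i)).const_mul (c i)
  calc ‖∫ y in x₀..x, f y‖
      ≤ |∫ y in x₀..x, m * ∑ i ∈ s, c i * powTerm m x₀ (j i) y| :=
        intervalIntegral.norm_integral_le_abs_of_norm_le
          (ae_restrict_of_forall_mem measurableSet_uIoc fun y hy => hf y (hsub hy))
          ((continuous_const.mul (continuous_finsetSum _ fun i _ => hcont i)).intervalIntegrable _ _)
    _ = |∑ i ∈ s, c i * (m * ∫ y in x₀..x, powTerm m x₀ (j i) y)| := by
        rw [intervalIntegral.integral_const_mul, intervalIntegral.integral_finsetSum fun i _ =>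
          (hcont i).intervalIntegrable _ _, mul_sum]
        simp only [intervalIntegral.integral_const_mul, mul_left_comm]
    _ ≤ ∑ i ∈ s, c i * powTerm m x₀ (j i + 1) x := by
        refine (abs_sum_le_sum_abs _ _).trans (sum_le_sum fun i _ => ?_)
        rw [abs_mul, abs_mul, abs_of_nonneg (hc i), abs_of_nonneg hm, mul_abs_integral_powTerm hm]

def majorantCoeff (N n i : ℕ) : ℕ := if n ≤ N * i then n.choose i else 0

lemma majorantCoeff_le_choose (N n i : ℕ) : majorantCoeff N n i ≤ n.choose i := by
  unfold majorantCoeff; split_ifs <;> simp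

lemma majorantCoeff_eq_zero_of_lt {N n i : ℕ} (h : n < i) : majorantCoeff N n i = 0 := by
  simp [majorantCoeff, choose_eq_zero_of_lt h]

lemma sum_range_choose_eq_succ_choose_succ (n i : ℕ) :
    ∑ j ∈ range (n + 1), j.choose i = (n + 1).choose (i + 1) := by
  rw [← sum_Icc_choose]
  refine (sum_subset (fun j hj => ?_) fun j _ hj => ?_).symm
  · simp only [mem_Icc, mem_range] at hj ⊢; omega
  · exact choose_eq_zero_of_lt (by simp_all)

lemma sum_majorantCoeff_le (N n i : ℕ) :
    ∑ k ∈ Icc 1 N, (if k ≤ n + 1 then majorantCoeff N (n + 1 - k) i else 0)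
      ≤ majorantCoeff N (n + 1) (i + 1) := by
  by_cases h : n + 1 ≤ N * (i + 1)
  · calc ∑ k ∈ Icc 1 N, (if k ≤ n + 1 then majorantCoeff N (n + 1 - k) i else 0)
        ≤ ∑ k ∈ Icc 1 N with k ≤ n + 1, (n + 1 - k).choose i := by
          rw [sum_filter]
          gcongr with k
          split_ifs
          exacts [majorantCoeff_le_choose N _ i, le_rfl]
      _ ≤ ∑ k ∈ Icc 1 (n + 1), (n + 1 - k).choose i :=
          sum_le_sum_of_subset fun k hk => by simp only [mem_filter, mem_Icc] at hk ⊢; omega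
      _ = ∑ j ∈ range (n + 1), j.choose i :=
          sum_nbij' (fun k => n + 1 - k) (fun j => n + 1 - j) (by simp; omega) (by simp; omega)
            (by simp; omega) (by simp; omega) (by simp)
      _ = majorantCoeff N (n + 1) (i + 1) := by
          rw [sum_range_choose_eq_succ_choose_succ, majorantCoeff, if_pos h]
  · rw [majorantCoeff, if_neg h]
    refine (sum_eq_zero fun k hk => ?_).le
    have hk := (mem_Icc.mp hk).2
    have : ¬ n + 1 - k ≤ N * i := by rw [mul_add_one] at h; omega
    simp [majorantCoeff, this]

noncomputable def evenMajorant (N : ℕ) (m x₀ : ℝ) (n : ℕ) (x : ℝ) : ℝ :=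
  ∑ i ∈ range (n + 1), (majorantCoeff N n i : ℝ) * powTerm m x₀ (2 * i) x

lemma evenMajorant_eq_sum_range {N n L : ℕ} (h : n ≤ L) (m x₀ x : ℝ) :
    evenMajorant N m x₀ n x
      = ∑ i ∈ range (L + 1), (majorantCoeff N n i : ℝ) * powTerm m x₀ (2 * i) x := by
  refine sum_subset (range_subset_range.mpr (by omega)) fun i _ hi => ?_
  rw [majorantCoeff_eq_zero_of_lt (by simpa using hi), cast_zero, zero_mul]

lemma sum_evenMajorant_le {m : ℝ} (hm : 0 ≤ m) (N n : ℕ) (x₀ x : ℝ) :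
    ∑ k ∈ Icc 1 N, (if k ≤ n + 1 then evenMajorant N m x₀ (n + 1 - k) x else 0)
      ≤ ∑ i ∈ range (n + 1), (majorantCoeff N (n + 1) (i + 1) : ℝ) * powTerm m x₀ (2 * i) x := by
  calc ∑ k ∈ Icc 1 N, (if k ≤ n + 1 then evenMajorant N m x₀ (n + 1 - k) x else 0)
      = ∑ i ∈ range (n + 1), (∑ k ∈ Icc 1 N,
          ((if k ≤ n + 1 then majorantCoeff N (n + 1 - k) i else 0 : ℕ) : ℝ))
            * powTerm m x₀ (2 * i) x := by
        simp_rw [sum_mul]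
        rw [sum_comm]
        refine sum_congr rfl fun k hk => ?_
        split_ifs
        · exact evenMajorant_eq_sum_range (by simp at hk; omega) m x₀ x
        · simp
    _ ≤ _ := by
        gcongr with i
        · exact powTerm_nonneg hm x₀ _ x
        · exact_mod_cast sum_majorantCoeff_le N n i

lemma evenMajorant_succ (N : ℕ) (m x₀ : ℝ) (n : ℕ) (x : ℝ) :
    evenMajorant N m x₀ (n + 1) x = ∑ i ∈ range (n + 1),
      (majorantCoeff N (n + 1) (i + 1) : ℝ) * powTerm m x₀ (2 * i + 1 + 1) x := by
  simp [evenMajorant, sum_range_succ' _ (n + 1), majorantCoeff, mul_add_one]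

lemma evenMajorant_le {a b m x₀ x : ℝ} (hm : 0 ≤ m) (hx₀ : x₀ ∈ Set.Icc a b)
    (hx : x ∈ Set.Icc a b) (N n : ℕ) :
    evenMajorant N m x₀ n x ≤ ((m * (b - a)) ^ 2 + 1) ^ n / (2 * (n / N))! := by
  have hdist : m * |x - x₀| ≤ m * (b - a) := mul_le_mul_of_nonneg_left
    (abs_sub_le_iff.mpr ⟨by linarith [hx.2, hx₀.1], by linarith [hx.1, hx₀.2]⟩) hm
  calc evenMajorant N m x₀ n x
      ≤ ∑ i ∈ range (n + 1), (n.choose i : ℝ) * (((m * (b - a)) ^ 2) ^ i / (2 * (n / N))!) := by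
        refine sum_le_sum fun i _ => ?_
        unfold majorantCoeff powTerm
        split_ifs with h
        · gcongr
          · rw [pow_mul]; gcongr
          · exact Nat.div_le_of_le_mul h
        · simp only [cast_zero, zero_mul]; positivity
    _ = ((m * (b - a)) ^ 2 + 1) ^ n / (2 * (n / N))! := by
        rw [add_pow, sum_div]
        refine sum_congr rfl fun i _ => ?_
        ring

lemma hasSum_pow_div_factorial_two_mul_div {M : ℝ} (hM : 0 ≤ M) {N : ℕ} (hN : 1 ≤ N) :
    HasSum (fun n => M ^ n / (2 * (n / N))!)
      ((∑ k ∈ range N, M ^ k) * Real.cosh (M ^ ((N : ℝ) / 2))) := by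
  have : NeZero N := ⟨by omega⟩
  have hcosh : HasSum (fun q => (M ^ N) ^ q / (2 * q)!) (Real.cosh (M ^ ((N : ℝ) / 2))) := by
    convert Real.hasSum_cosh (M ^ ((N : ℝ) / 2)) using 2 with q
    rw [pow_mul, ← Real.rpow_mul_natCast hM, Nat.cast_two, div_mul_cancel₀ _ two_ne_zero,
      Real.rpow_natCast]
  have hfin : HasSum (fun s : Fin N => M ^ (s : ℕ)) (∑ k ∈ range N, M ^ k) := by
    convert hasSum_fintype _
    exact (Fin.sum_univ_eq_sum_range _ N).symm
  rw [mul_comm, ← (Nat.divModEquiv N).symm.hasSum_iff]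
  refine (hcosh.mul hfin (hcosh.summable.mul_of_nonneg hfin.summable (fun _ => by positivity)
    fun _ => by positivity)).congr_fun fun ⟨q, s⟩ => ?_
  have hdiv : (q * N + s) / N = q := by
    rw [add_comm, Nat.add_mul_div_right _ _ (by omega), Nat.div_eq_of_lt s.isLt, zero_add]
  simp only [Function.comp_apply, Nat.divModEquiv_symm_apply, hdiv, pow_add, pow_mul]
  ring

theorem norm_Xt_two_mul_add_one_le {a b x₀ m : ℝ} (hx₀ : x₀ ∈ Set.Icc a b) (hm : 0 ≤ m)
    {N : ℕ} {u₀ : ℝ → ℂ} {r : ℕ → ℝ → ℂ} {Xt : ℤ → ℝ → ℂ}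
    (hneg : ∀ n : ℤ, n < 0 → ∀ x, Xt n x = 0)
    (hodd : ∀ n : ℤ, 0 < n → Odd n → ∀ x,
      Xt n x = ∫ y in x₀..x, u₀ y ^ 2 * ∑ k ∈ Finset.Icc 1 N, Xt (n - 2 * (k : ℤ) + 1) y * r k y)
    (hbound1 : ∀ k ∈ Finset.Icc 1 N, ∀ x ∈ Set.Icc a b, ‖u₀ x ^ 2 * r k x‖ ≤ m)
    {n : ℕ} (ih : ∀ j ≤ n, ∀ y ∈ Set.Icc a b, ‖Xt (2 * j) y‖ ≤ evenMajorant N m x₀ j y)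
    {x : ℝ} (hx : x ∈ Set.Icc a b) :
    ‖Xt (2 * n + 1) x‖ ≤ ∑ i ∈ range (n + 1),
      (majorantCoeff N (n + 1) (i + 1) : ℝ) * powTerm m x₀ (2 * i + 1) x := by
  rw [hodd _ (by omega) (odd_two_mul_add_one _) x]
  refine norm_integral_le_sum_powTerm hm hx₀ hx _ _ (fun _ => by positivity) (2 * ·)
    fun y hy => le_trans ?_ (mul_le_mul_of_nonneg_left (sum_evenMajorant_le hm N n x₀ y) hm)
  rw [mul_sum, mul_sum]
  refine (norm_sum_le _ _).trans (sum_le_sum fun k hk => ?_)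
  rw [mul_comm (Xt _ y), ← mul_assoc, norm_mul]
  have hk1 := (mem_Icc.mp hk).1
  split_ifs with hkn
  · have hidx : 2 * (n : ℤ) + 1 - 2 * k + 1 = 2 * ((n + 1 - k : ℕ) : ℤ) := by
      push_cast [hkn]; ring
    rw [hidx]
    exact mul_le_mul (hbound1 k hk y hy) (ih _ (by omega) y hy) (norm_nonneg _) hm
  · rw [hneg _ (by omega), norm_zero, mul_zero, mul_zero]

theorem norm_Xt_two_mul_le {a b x₀ m : ℝ} (hx₀ : x₀ ∈ Set.Icc a b) (hm : 0 ≤ m) {N : ℕ}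
    {p u₀ : ℝ → ℂ} {r : ℕ → ℝ → ℂ} {Xt : ℤ → ℝ → ℂ}
    (hneg : ∀ n : ℤ, n < 0 → ∀ x, Xt n x = 0)
    (hzero : ∀ x, Xt 0 x = 1)
    (hodd : ∀ n : ℤ, 0 < n → Odd n → ∀ x,
      Xt n x = ∫ y in x₀..x, u₀ y ^ 2 * ∑ k ∈ Finset.Icc 1 N, Xt (n - 2 * (k : ℤ) + 1) y * r k y)
    (heven : ∀ n : ℤ, 0 < n → Even n → ∀ x,
      Xt n x = ∫ y in x₀..x, Xt (n - 1) y / (u₀ y ^ 2 * p y))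
    (hbound1 : ∀ k ∈ Finset.Icc 1 N, ∀ x ∈ Set.Icc a b, ‖u₀ x ^ 2 * r k x‖ ≤ m)
    (hbound2 : ∀ x ∈ Set.Icc a b, ‖1 / (u₀ x ^ 2 * p x)‖ ≤ m) (n : ℕ) :
    ∀ x ∈ Set.Icc a b, ‖Xt (2 * n) x‖ ≤ evenMajorant N m x₀ n x := by
  induction n using Nat.strong_induction_on with
  | _ n ih =>
  rcases n with _ | n
  · intro x _
    simp [hzero, evenMajorant, majorantCoeff, powTerm]
  intro x hx
  rw [evenMajorant_succ, heven _ (by omega) ⟨n + 1, by push_cast; ring⟩ x]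
  refine norm_integral_le_sum_powTerm hm hx₀ hx _ _ (fun _ => by positivity) (2 * · + 1)
    fun y hy => ?_
  rw [div_eq_mul_one_div, norm_mul, mul_comm,
    show 2 * ((n + 1 : ℕ) : ℤ) - 1 = 2 * n + 1 by push_cast; ring]
  exact mul_le_mul (hbound2 y hy)
    (norm_Xt_two_mul_add_one_le hx₀ hm hneg hodd hbound1 (fun j hj => ih j (by omega)) hy)
    (norm_nonneg _) hm

theorem stmt5_general (a b x₀ : ℝ) (hx₀ : x₀ ∈ Set.Icc a b)
    (N : ℕ) (hN : 1 ≤ N) (p u₀ : ℝ → ℂ) (r : ℕ → ℝ → ℂ) (m : ℝ) (hm : 0 ≤ m)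
    (Xt : ℤ → ℝ → ℂ)
    (hneg : ∀ n : ℤ, n < 0 → ∀ x, Xt n x = 0)
    (hzero : ∀ x, Xt 0 x = 1)
    (hodd : ∀ n : ℤ, 0 < n → Odd n → ∀ x,
      Xt n x = ∫ y in x₀..x, u₀ y ^ 2 * ∑ k ∈ Finset.Icc 1 N, Xt (n - 2 * (k : ℤ) + 1) y * r k y)
    (heven : ∀ n : ℤ, 0 < n → Even n → ∀ x,
      Xt n x = ∫ y in x₀..x, Xt (n - 1) y / (u₀ y ^ 2 * p y))
    (hbound1 : ∀ k ∈ Finset.Icc 1 N, ∀ x ∈ Set.Icc a b, ‖u₀ x ^ 2 * r k x‖ ≤ m)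
    (hbound2 : ∀ x ∈ Set.Icc a b, ‖1 / (u₀ x ^ 2 * p x)‖ ≤ m)
    (lam : ℂ) :
    (∀ x ∈ Set.Icc a b,
      Summable (fun n : ℕ => ‖lam‖ ^ n * ‖Xt (2 * n) x‖) ∧
      (∑' n : ℕ, ‖lam‖ ^ n * ‖Xt (2 * n) x‖) ≤
        (∑ k ∈ Finset.range N, (‖lam‖ * ((m * (b - a)) ^ 2 + 1)) ^ k) *
          Real.cosh ((‖lam‖ * ((m * (b - a)) ^ 2 + 1)) ^ ((N : ℝ) / 2))) ∧
    TendstoUniformlyOn (fun (M : ℕ) (x : ℝ) => ∑ n ∈ Finset.range M, lam ^ n * Xt (2 * n) x)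
      (fun x => ∑' n : ℕ, lam ^ n * Xt (2 * n) x) atTop (Set.Icc a b) := by
  have hmajorant := hasSum_pow_div_factorial_two_mul_div
    (M := ‖lam‖ * ((m * (b - a)) ^ 2 + 1)) (by positivity) hN
  have hterm : ∀ n : ℕ, ∀ x ∈ Set.Icc a b, ‖lam‖ ^ n * ‖Xt (2 * n) x‖
      ≤ (‖lam‖ * ((m * (b - a)) ^ 2 + 1)) ^ n / (2 * (n / N))! := fun n x hx => by
    rw [mul_pow, mul_div_assoc]
    gcongr
    exact (norm_Xt_two_mul_le hx₀ hm hneg hzero hodd heven hbound1 hbound2 n x hx).trans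
      (evenMajorant_le hm hx₀ hx N n)
  refine ⟨fun x hx => ?_, tendstoUniformlyOn_tsum_nat hmajorant.summable fun n x hx => ?_⟩
  · have hsum := hmajorant.summable.of_nonneg_of_le (fun n => by positivity) (hterm · x hx)
    exact ⟨hsum, hmajorant.tsum_eq ▸ hsum.tsum_le_tsum (hterm · x hx) hmajorant.summable⟩
  · simpa only [norm_mul, norm_pow] using hterm n x hx

theorem stmt5 (a b x₀ : ℝ) (hab : a ≤ b) (hx₀ : x₀ ∈ Set.Icc a b)
    (N : ℕ) (hN : 1 ≤ N) (p u₀ : ℝ → ℂ) (r : ℕ → ℝ → ℂ) (m : ℝ) (hm : 0 ≤ m)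
    (Xt : ℤ → ℝ → ℂ)
    (hneg : ∀ n : ℤ, n < 0 → ∀ x, Xt n x = 0)
    (hzero : ∀ x, Xt 0 x = 1)
    (hodd : ∀ n : ℤ, 0 < n → Odd n → ∀ x,
      Xt n x = ∫ y in x₀..x, u₀ y ^ 2 * ∑ k ∈ Finset.Icc 1 N, Xt (n - 2 * (k : ℤ) + 1) y * r k y)
    (heven : ∀ n : ℤ, 0 < n → Even n → ∀ x,
      Xt n x = ∫ y in x₀..x, Xt (n - 1) y / (u₀ y ^ 2 * p y))
    (hcont1 : ∀ k ∈ Finset.Icc 1 N, ContinuousOn (fun x => u₀ x ^ 2 * r k x) (Set.Icc a b))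
    (hcont2 : ContinuousOn (fun x => 1 / (u₀ x ^ 2 * p x)) (Set.Icc a b))
    (hbound1 : ∀ k ∈ Finset.Icc 1 N, ∀ x ∈ Set.Icc a b, ‖u₀ x ^ 2 * r k x‖ ≤ m)
    (hbound2 : ∀ x ∈ Set.Icc a b, ‖1 / (u₀ x ^ 2 * p x)‖ ≤ m)
    (lam : ℂ) :
    (∀ x ∈ Set.Icc a b,
      Summable (fun n : ℕ => ‖lam‖ ^ n * ‖Xt (2 * n) x‖) ∧
      (∑' n : ℕ, ‖lam‖ ^ n * ‖Xt (2 * n) x‖) ≤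
        (∑ k ∈ Finset.range N, (‖lam‖ * ((m * (b - a)) ^ 2 + 1)) ^ k) *
          Real.cosh ((‖lam‖ * ((m * (b - a)) ^ 2 + 1)) ^ ((N : ℝ) / 2))) ∧
    TendstoUniformlyOn (fun (M : ℕ) (x : ℝ) => ∑ n ∈ Finset.range M, lam ^ n * Xt (2 * n) x)
      (fun x => ∑' n : ℕ, lam ^ n * Xt (2 * n) x) atTop (Set.Icc a b) :=
  stmt5_general a b x₀ hx₀ N hN p u₀ r m hm Xt hneg hzero hodd heven hbound1 hbound2 lam
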